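/- Let Ω ⊆ ℝⁿ be a nonempty closed convex set and let T : ℝⁿ ⇉ ℝⁿ be a set-valued map with nonempty, convex and compact values which is monotone, locally bounded and has closed graph. Then the strong solution set sol(T,Ω) of the generalized variational inequality GVI(T,Ω) is a convex set. -/

import Mathlib

open Set Filter
open scoped InnerProductSpace Topology

/-!
By monotonicity every strong solution `x` is a Minty solution: `0 ≤ ⟪w, y - x⟫` for all `y ∈ Ω`
and `w ∈ T y`; the Minty solutions form a convex set, being cut out of `Ω` by half-spaces.
Conversely, at a Minty solution `x`, approaching `x` along the segment towards `y ∈ Ω` and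
using local boundedness and the closed graph gives some `v ∈ T x` with `0 ≤ ⟪v, y - x⟫`;
Sion's minimax theorem on the compact convex set `T x` makes `v` independent of `y`. So both
solution sets coincide.
-/

theorem exists_mem_mapClusterPt_of_isClosed_graph {X E ι : Type*} [TopologicalSpace X]
    [PseudoMetricSpace E] [ProperSpace E] {T : X → Set E}
    (hlocbdd : ∀ x, ∃ U ∈ 𝓝 x, Bornology.IsBounded (⋃ y ∈ U, T y))
    (hgraph : IsClosed {p : X × E | p.2 ∈ T p.1})
    {l : Filter ι} [l.NeBot] {xs : ι → X} {ws : ι → E} {x : X}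
    (hxs : Tendsto xs l (𝓝 x)) (hws : ∀ᶠ i in l, ws i ∈ T (xs i)) :
    ∃ v ∈ T x, MapClusterPt v l ws := by
  obtain ⟨U, hU, hB⟩ := hlocbdd x
  have hws_bdd : ∀ᶠ i in l, ws i ∈ closure (⋃ y ∈ U, T y) :=
    ((hxs.eventually_mem hU).and hws).mono fun i hi => subset_closure (mem_biUnion hi.1 hi.2)
  obtain ⟨v, -, hv⟩ := hB.isCompact_closure.exists_clusterPt (tendsto_principal.2 hws_bdd)
  obtain ⟨u, hul, hu⟩ := mapClusterPt_iff_ultrafilter.1 hv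
  exact ⟨v, hgraph.mem_of_tendsto ((hxs.mono_left hul).prodMk_nhds hu) (hul hws), hv⟩

section InnerProductSpace

variable {E : Type*} [NormedAddCommGroup E] [InnerProductSpace ℝ E]

def gviSolutionSet (Ω : Set E) (T : E → Set E) : Set E :=
  {x | x ∈ Ω ∧ ∃ v ∈ T x, ∀ z ∈ Ω, 0 ≤ ⟪v, z - x⟫_ℝ}

def mintySolutionSet (Ω : Set E) (T : E → Set E) : Set E :=
  {x | x ∈ Ω ∧ ∀ y ∈ Ω, ∀ w ∈ T y, 0 ≤ ⟪w, y - x⟫_ℝ}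

theorem convex_mintySolutionSet {Ω : Set E} (hΩ : Convex ℝ Ω) (T : E → Set E) :
    Convex ℝ (mintySolutionSet Ω T) := by
  have hcut : mintySolutionSet Ω T = Ω ∩ ⋂ y ∈ Ω, ⋂ w ∈ T y, {x | ⟪w, x⟫_ℝ ≤ ⟪w, y⟫_ℝ} := by
    ext x
    simp [mintySolutionSet, inner_sub_right]
  rw [hcut]
  exact hΩ.inter <| convex_iInter₂ fun y _ => convex_iInter₂ fun w _ =>
    convex_halfSpace_le (innerₗ E w).isLinear _

theorem gviSolutionSet_subset_mintySolutionSet {Ω : Set E} {T : E → Set E}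
    (hmono : ∀ x y v w, v ∈ T x → w ∈ T y → 0 ≤ ⟪v - w, x - y⟫_ℝ) :
    gviSolutionSet Ω T ⊆ mintySolutionSet Ω T := by
  rintro x ⟨hx, v, hv, hsol⟩
  refine ⟨hx, fun y hy w hw => ?_⟩
  have := hmono y x w v hw hv
  rw [inner_sub_left] at this
  linarith [hsol y hy]

theorem exists_forall_inner_nonneg_of_forall_exists {K S : Set E} (hKne : K.Nonempty)
    (hKconv : Convex ℝ K) (hKcpt : IsCompact K) (hSconv : Convex ℝ S)
    (h : ∀ s ∈ S, ∃ v ∈ K, 0 ≤ ⟪v, s⟫_ℝ) :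
    ∃ v ∈ K, ∀ s ∈ S, 0 ≤ ⟪v, s⟫_ℝ := by
  -- Otherwise finitely many `s ∈ S` already exclude every `v ∈ K`, and the finite form of Sion's
  -- minimax theorem merges them into a single `s`.
  by_contra! hneg
  obtain ⟨S₀, hS₀S, hS₀fin, hcover⟩ := hKcpt.elim_finite_subcover_image
    (b := S) (c := fun s => {v | ⟪v, s⟫_ℝ < 0})
    (fun s _ => isOpen_lt (continuous_id.inner continuous_const) continuous_const)
    (fun v hv => by simpa using hneg v hv)
  obtain ⟨s, hs, hlt⟩ := Sion.exists_lt_iInf_of_lt_iInf_of_finite (f := fun v s => -⟪v, s⟫_ℝ)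
    (t := 0) hKne hKcpt
    (fun s _ => (continuous_id.inner continuous_const).neg.lowerSemicontinuous
      |>.lowerSemicontinuousOn _)
    (fun s _ => (LinearMap.convexOn (-(innerₗ E).flip s) hKconv).quasiconvexOn)
    hSconv
    (fun v _ => (continuous_const.inner continuous_id).neg.upperSemicontinuous
      |>.upperSemicontinuousOn _)
    (fun v _ => (LinearMap.concaveOn (-innerₗ E v) hSconv).quasiconcaveOn)
    hKconv hS₀fin hS₀S
    (fun v hv => by simpa using mem_iUnion₂.1 (hcover hv))
  obtain ⟨v, hv, hnonneg⟩ := h s hs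
  linarith [hlt v hv]

variable [ProperSpace E]

theorem exists_inner_nonneg_of_mem_mintySolutionSet {Ω : Set E} (hΩ : Convex ℝ Ω)
    {T : E → Set E} (hTne : ∀ x, (T x).Nonempty)
    (hlocbdd : ∀ x, ∃ U ∈ 𝓝 x, Bornology.IsBounded (⋃ y ∈ U, T y))
    (hgraph : IsClosed {p : E × E | p.2 ∈ T p.1})
    {x : E} (hx : x ∈ mintySolutionSet Ω T) {y : E} (hy : y ∈ Ω) :
    ∃ v ∈ T x, 0 ≤ ⟪v, y - x⟫_ℝ := by
  choose w hw using fun t : ℝ => hTne (x + t • (y - x))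
  have hseg : Tendsto (fun t : ℝ => x + t • (y - x)) (𝓝[>] 0) (𝓝 x) := by
    have : Continuous fun t : ℝ => x + t • (y - x) := by fun_prop
    simpa using (this.tendsto 0).mono_left nhdsWithin_le_nhds
  obtain ⟨v, hv, hclus⟩ := exists_mem_mapClusterPt_of_isClosed_graph hlocbdd hgraph hseg
    (Eventually.of_forall hw)
  have hw_nonneg : ∀ᶠ t in 𝓝[>] (0 : ℝ), 0 ≤ ⟪w t, y - x⟫_ℝ := by
    filter_upwards [Ioc_mem_nhdsGT one_pos] with t ht
    have := hx.2 _ (hΩ.add_smul_sub_mem hx.1 hy (Ioc_subset_Icc_self ht)) (w t) (hw t)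
    rw [add_sub_cancel_left, real_inner_smul_right] at this
    exact nonneg_of_mul_nonneg_right this ht.1
  have hclosed : IsClosed {w : E | 0 ≤ ⟪w, y - x⟫_ℝ} :=
    isClosed_le continuous_const (continuous_id.inner continuous_const)
  exact ⟨v, hv, hclosed.mem_of_mapClusterPt hclus hw_nonneg⟩

theorem mintySolutionSet_subset_gviSolutionSet {Ω : Set E} (hΩ : Convex ℝ Ω)
    {T : E → Set E} (hTne : ∀ x, (T x).Nonempty) (hTconv : ∀ x, Convex ℝ (T x))
    (hTcpt : ∀ x, IsCompact (T x))
    (hlocbdd : ∀ x, ∃ U ∈ 𝓝 x, Bornology.IsBounded (⋃ y ∈ U, T y))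
    (hgraph : IsClosed {p : E × E | p.2 ∈ T p.1}) :
    mintySolutionSet Ω T ⊆ gviSolutionSet Ω T := by
  intro x hx
  have hpointwise (y : E) (hy : y ∈ Ω) : ∃ v ∈ T x, 0 ≤ ⟪v, y - x⟫_ℝ :=
    exists_inner_nonneg_of_mem_mintySolutionSet hΩ hTne hlocbdd hgraph hx hy
  obtain ⟨v, hv, hsol⟩ := exists_forall_inner_nonneg_of_forall_exists (hTne x) (hTconv x)
    (hTcpt x) (hΩ.translate (-x)) <| forall_mem_image.2 fun y hy => by
      simpa [sub_eq_neg_add] using hpointwise y hy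
  exact ⟨hx.1, v, hv, fun z hz => by simpa [sub_eq_neg_add] using hsol _ (mem_image_of_mem _ hz)⟩

end InnerProductSpace

theorem gvi_strong_solution_set_convex {n : ℕ}
    (Ω : Set (EuclideanSpace ℝ (Fin n)))
    (hconv : Convex ℝ Ω)
    (T : EuclideanSpace ℝ (Fin n) → Set (EuclideanSpace ℝ (Fin n)))
    (hTne : ∀ x, (T x).Nonempty)
    (hTconv : ∀ x, Convex ℝ (T x))
    (hTcpt : ∀ x, IsCompact (T x))
    (hmono : ∀ x y v w, v ∈ T x → w ∈ T y → 0 ≤ ⟪v - w, x - y⟫_ℝ)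
    (hlocbdd : ∀ x : EuclideanSpace ℝ (Fin n),
      ∃ U ∈ nhds x, Bornology.IsBounded (⋃ y ∈ U, T y))
    (hgraph : IsClosed {p : (EuclideanSpace ℝ (Fin n)) × (EuclideanSpace ℝ (Fin n)) |
      p.2 ∈ T p.1}) :
    Convex ℝ {x : (EuclideanSpace ℝ (Fin n)) |
      x ∈ Ω ∧ ∃ v ∈ T x, ∀ z ∈ Ω, 0 ≤ ⟪v, z - x⟫_ℝ} := by
  have hsol : gviSolutionSet Ω T = mintySolutionSet Ω T :=
    (gviSolutionSet_subset_mintySolutionSet hmono).antisymm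
      (mintySolutionSet_subset_gviSolutionSet hconv hTne hTconv hTcpt hlocbdd hgraph)
  change Convex ℝ (gviSolutionSet Ω T)
  exact hsol ▸ convex_mintySolutionSet hconv T
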